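/- arXiv:1803.08556 — 3 statements merged into one kernel-verified Lean document; each statement's English description precedes it below -/
import Mathlib

section
/- If {X_λ} is a family of compact topological spaces such that each path-component space π₀(X_λ) is Hausdorff, then the natural continuous bijection φ : π₀(∏_λ X_λ) → ∏_λ π₀(X_λ) is a homeomorphism. -/
/-- The path-component space `π₀(X)`: the quotient of `X` by the relation of being
joined by a path, equipped with the quotient topology. -/
instance pi0TopologicalSpace (X : Type*) [TopologicalSpace X] :
    TopologicalSpace (ZerothHomotopy X) :=
  instTopologicalSpaceQuotient

/-- The natural quotient map `q_X : X → π₀(X)`. -/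
def pi0Mk {X : Type*} [TopologicalSpace X] (x : X) : ZerothHomotopy X :=
  Quotient.mk (pathSetoid X) x

/-! Points of `∏ X_λ` are joined by a path iff all their coordinates are, so `φ` is a continuous
bijection. Its source is a quotient of the compact space `∏ X_λ` (Tychonoff) and its target is
a product of Hausdorff spaces, so it is a homeomorphism. -/

open Topology

theorem pi0Mk_eq_pi0Mk_iff {Y : Type*} [TopologicalSpace Y] {x y : Y} :
    pi0Mk x = pi0Mk y ↔ Joined x y :=
  Quotient.eq

theorem isQuotientMap_pi0Mk (Y : Type*) [TopologicalSpace Y] :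
    IsQuotientMap (pi0Mk : Y → ZerothHomotopy Y) :=
  isQuotientMap_quotient_mk'

instance pi0CompactSpace (Y : Type*) [TopologicalSpace Y] [CompactSpace Y] :
    CompactSpace (ZerothHomotopy Y) :=
  Quotient.compactSpace

section PiMap

variable {Λ : Type*} {X : Λ → Type*} [∀ l, TopologicalSpace (X l)]
  {φ : ZerothHomotopy (∀ l, X l) → ∀ l, ZerothHomotopy (X l)}

theorem continuous_pi0_pi_map (hφ : ∀ x : ∀ l, X l, φ (pi0Mk x) = fun l => pi0Mk (x l)) :
    Continuous φ := by
  rw [(isQuotientMap_pi0Mk _).continuous_iff, show φ ∘ pi0Mk = fun x l => pi0Mk (x l) from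
    funext hφ]
  exact continuous_pi fun l => (isQuotientMap_pi0Mk _).continuous.comp (continuous_apply l)

theorem injective_pi0_pi_map (hφ : ∀ x : ∀ l, X l, φ (pi0Mk x) = fun l => pi0Mk (x l)) :
    Function.Injective φ := by
  rintro ⟨x⟩ ⟨y⟩ hxy
  change φ (pi0Mk x) = φ (pi0Mk y) at hxy
  rw [hφ, hφ] at hxy
  exact pi0Mk_eq_pi0Mk_iff.2 <| Joined.pi fun l => pi0Mk_eq_pi0Mk_iff.1 (congrFun hxy l)

theorem surjective_pi0_pi_map (hφ : ∀ x : ∀ l, X l, φ (pi0Mk x) = fun l => pi0Mk (x l)) :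
    Function.Surjective φ := by
  intro c
  choose x hx using fun l => (isQuotientMap_pi0Mk (X l)).surjective (c l)
  exact ⟨pi0Mk x, (hφ x).trans (funext hx)⟩

end PiMap

/-- If each `X_λ` is compact and each `π₀(X_λ)` is Hausdorff, then the canonical
bijection `φ : π₀(∏ X_λ) → ∏ π₀(X_λ)` is a homeomorphism. -/
theorem pi0_prod_homeomorph_of_compact {Λ : Type*} {X : Λ → Type*}
    [∀ l, TopologicalSpace (X l)] [∀ l, CompactSpace (X l)]
    [∀ l, T2Space (ZerothHomotopy (X l))]
    (φ : ZerothHomotopy (∀ l, X l) → ∀ l, ZerothHomotopy (X l))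
    (hφ : ∀ x : ∀ l, X l, φ (pi0Mk x) = fun l => pi0Mk (x l)) :
    IsHomeomorph φ :=
  isHomeomorph_iff_continuous_bijective.2
    ⟨continuous_pi0_pi_map hφ, injective_pi0_pi_map hφ, surjective_pi0_pi_map hφ⟩
end

section
/- Suppose A is a compact Hausdorff space such that π₀(A) is Hausdorff, and let X ⊆ π₀(A) be a subspace. If B = q_A⁻¹(X) ⊆ A, then the restriction q_A|_B : B → X is a perfect quotient map identifying exactly the path components of B; hence there is a canonical homeomorphism π₀(B) ≅ X. -/
/-!
Compactness of `A` and the Hausdorff property of `π₀(A)` make `q_A` a proper map, and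
properness is inherited by restrictions to preimages. A preimage `q_A⁻¹(X)` is a union of
path components of `A`, so a path of `A` between two of its points stays inside it: two points
of `B` are joined in `B` exactly when `q_A` identifies them. A quotient map whose fibres are
the path components then descends to a homeomorphism out of `π₀`.
-/

open Topology

section Pi0

variable {Y Z : Type*} [TopologicalSpace Y] [TopologicalSpace Z]

theorem continuous_pi0Mk : Continuous (pi0Mk : Y → ZerothHomotopy Y) :=
  continuous_quotient_mk'

theorem pi0Mk_surjective : Function.Surjective (pi0Mk : Y → ZerothHomotopy Y) :=
  Quotient.mk_surjective

theorem pi0Mk_eq_iff {a b : Y} : pi0Mk a = pi0Mk b ↔ Joined a b :=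
  Quotient.eq

theorem isProperMap_pi0Mk [CompactSpace Y] [T2Space (ZerothHomotopy Y)] :
    IsProperMap (pi0Mk : Y → ZerothHomotopy Y) :=
  continuous_pi0Mk.isProperMap

theorem pathComponent_subset_preimage_pi0Mk {X : Set (ZerothHomotopy Y)} {a : Y}
    (ha : pi0Mk a ∈ X) : pathComponent a ⊆ pi0Mk ⁻¹' X := fun b hb =>
  show pi0Mk b ∈ X from pi0Mk_eq_iff.mpr hb.symm ▸ ha

theorem joined_subtype_iff_of_pathComponent_subset {S : Set Y}
    (hS : ∀ a ∈ S, pathComponent a ⊆ S) {a b : S} : Joined a b ↔ Joined (a : Y) b := by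
  refine ⟨fun h => h.map continuous_subtype_val, fun h => ?_⟩
  have hab : JoinedIn (pathComponent (a : Y)) a b :=
    isPathConnected_pathComponent.joinedIn _ (mem_pathComponent_self _) _ h
  exact (hab.mono (hS a a.2)).joined_subtype

theorem restrictPreimage_pi0Mk_eq_iff (X : Set (ZerothHomotopy Y)) (a b : pi0Mk ⁻¹' X) :
    X.restrictPreimage pi0Mk a = X.restrictPreimage pi0Mk b ↔ Joined a b :=
  Subtype.ext_iff.trans <| pi0Mk_eq_iff.trans
    (joined_subtype_iff_of_pathComponent_subset
      fun _ ha => pathComponent_subset_preimage_pi0Mk ha).symm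

theorem Topology.IsQuotientMap.exists_homeomorph_zerothHomotopy {f : Y → Z}
    (hf : IsQuotientMap f) (hfib : ∀ a b, f a = f b ↔ Joined a b) :
    ∃ h : ZerothHomotopy Y ≃ₜ Z, ∀ y, h (pi0Mk y) = f y := by
  let g : ZerothHomotopy Y → Z := Quotient.lift f fun a b hab => (hfib a b).mpr hab
  have hg_quot : IsQuotientMap g :=
    IsQuotientMap.of_comp continuous_pi0Mk (continuous_quot_lift _ hf.continuous) hf
  have hg_inj : Function.Injective g := by
    rintro ⟨a⟩ ⟨b⟩ hab
    exact pi0Mk_eq_iff.mpr ((hfib a b).mp hab)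
  exact ⟨(isHomeomorph_iff_isQuotientMap_injective.mpr ⟨hg_quot, hg_inj⟩).homeomorph, fun _ => rfl⟩

end Pi0

theorem pi0_restrict_perfect_general {A : Type*} [TopologicalSpace A] [CompactSpace A]
    [T2Space (ZerothHomotopy A)] (X : Set (ZerothHomotopy A)) :
    ∃ r : ((pi0Mk : A → ZerothHomotopy A) ⁻¹' X) → X,
      (∀ b, (r b : ZerothHomotopy A) = pi0Mk (b : A)) ∧
      Continuous r ∧ IsClosedMap r ∧ (∀ x : X, IsCompact (r ⁻¹' {x})) ∧
      Topology.IsQuotientMap r ∧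
      (∀ a b, r a = r b ↔ Joined a b) ∧
      ∃ h : ZerothHomotopy ((pi0Mk : A → ZerothHomotopy A) ⁻¹' X) ≃ₜ X,
        ∀ b, h (pi0Mk b) = r b := by
  have hproper := (isProperMap_pi0Mk (Y := A)).restrictPreimage X
  have hquot : IsQuotientMap (X.restrictPreimage pi0Mk) :=
    hproper.isClosedMap.isQuotientMap hproper.continuous
      (pi0Mk_surjective.restrictPreimage X)
  exact ⟨X.restrictPreimage pi0Mk, fun _ => rfl, hproper.continuous, hproper.isClosedMap,
    fun _ => hproper.isCompact_preimage isCompact_singleton, hquot,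
    restrictPreimage_pi0Mk_eq_iff X, hquot.exists_homeomorph_zerothHomotopy
      (restrictPreimage_pi0Mk_eq_iff X)⟩

/-- If `A` is compact Hausdorff with `π₀(A)` Hausdorff and `X ⊆ π₀(A)`, then for
`B = q_A⁻¹(X)` the restriction `q_A|_B : B → X` is a perfect quotient map identifying
exactly the path components of `B`; hence `π₀(B) ≅ X` canonically. -/
theorem pi0_restrict_perfect {A : Type*} [TopologicalSpace A] [CompactSpace A] [T2Space A]
    [T2Space (ZerothHomotopy A)] (X : Set (ZerothHomotopy A)) :
    ∃ r : ((pi0Mk : A → ZerothHomotopy A) ⁻¹' X) → X,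
      (∀ b, (r b : ZerothHomotopy A) = pi0Mk (b : A)) ∧
      Continuous r ∧ IsClosedMap r ∧ (∀ x : X, IsCompact (r ⁻¹' {x})) ∧
      Topology.IsQuotientMap r ∧
      (∀ a b, r a = r b ↔ Joined a b) ∧
      ∃ h : ZerothHomotopy ((pi0Mk : A → ZerothHomotopy A) ⁻¹' X) ≃ₜ X,
        ∀ b, h (pi0Mk b) = r b :=
  pi0_restrict_perfect_general X
end

section
/- Let L be a linearly ordered set and let X = L × [0,1] carry the order topology of the lexicographic order. Then the path components of X are exactly the sets {ℓ} × [0,1] for ℓ ∈ L; consequently the path-component space π₀(X) is homeomorphic to L with its order topology, via the map induced by projection onto the first coordinate. -/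
/-!
Vertical segments `{ℓ} × [0,1]` are arcs. Conversely, the image of a path is order-connected, so a
path from height `ℓ₁` to height `ℓ₂ > ℓ₁` crosses the open middle of every fibre `{ℓ} × (0,1)`,
`ℓ₁ < ℓ < ℓ₂`; these crossings are disjoint nonempty open subsets of `[0,1]`, so there are only
countably many such `ℓ`. The first coordinate of the path then sweeps out a countable compact
connected subset of `L` containing `ℓ₁` and `ℓ₂`, which by Baire is a single point.

The first projection `X → L` is a quotient map whose fibres are the path components, so it
descends to a homeomorphism `π₀(X) ≃ₜ L`.
-/

open Set Filter Topology TopologicalSpace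

theorem PreconnectedSpace.subsingleton_of_countable {X : Type*} [TopologicalSpace X] [T1Space X]
    [BaireSpace X] [Countable X] [PreconnectedSpace X] : Subsingleton X := by
  rcases isEmpty_or_nonempty X with hX | hX
  · infer_instance
  -- By Baire, some point is isolated; its singleton is clopen, hence everything.
  obtain ⟨x, hx⟩ := nonempty_interior_of_iUnion_of_closed (f := fun x : X => ({x} : Set X))
    (fun _ => isClosed_singleton) (iUnion_of_singleton X)
  have hopen : IsOpen ({x} : Set X) := hx.subset_singleton_iff.mp interior_subset ▸ isOpen_interior
  have huniv : ({x} : Set X) = univ :=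
    (isClopen_iff.mp ⟨isClosed_singleton, hopen⟩).resolve_left (singleton_ne_empty x)
  exact subsingleton_univ_iff.mp (huniv ▸ subsingleton_singleton)

instance unitInterval.pathConnectedSpace : PathConnectedSpace unitInterval :=
  isPathConnected_iff_pathConnectedSpace.mp ((convex_Icc 0 1).isPathConnected ⟨0, by simp⟩)

namespace Prod.Lex

variable {α β : Type*} [LinearOrder α] [LinearOrder β]

theorem toLex_top_lt_iff [OrderTop β] {a : α} {z : Lex (α × β)} :
    toLex (a, ⊤) < z ↔ a < (ofLex z).1 := by
  simp [Prod.Lex.lt_iff]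

theorem lt_toLex_bot_iff [OrderBot β] {a : α} {z : Lex (α × β)} :
    z < toLex (a, ⊥) ↔ (ofLex z).1 < a := by
  simp [Prod.Lex.lt_iff]

theorem ofLex_fst_eq_of_mem_Icc {a : α} {b₀ b₁ : β} {z : Lex (α × β)}
    (hz : z ∈ Icc (toLex (a, b₀)) (toLex (a, b₁))) : (ofLex z).1 = a :=
  le_antisymm (monotone_fst_ofLex hz.2) (monotone_fst_ofLex hz.1)

end Prod.Lex

section LexTopology

variable {α β : Type*} [LinearOrder α] [LinearOrder β]
  [TopologicalSpace (Lex (α × β))] [OrderTopology (Lex (α × β))]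

theorem continuous_toLex_mk [TopologicalSpace β] [OrderTopology β] (a : α) :
    Continuous fun b : β => toLex (a, b) := by
  refine continuous_iff_continuousAt.2 fun b => tendsto_order.2 ⟨fun z hz => ?_, fun z hz => ?_⟩
  · rcases Prod.Lex.lt_iff.1 hz with h | ⟨h, h'⟩
    · exact Eventually.of_forall fun _ => Prod.Lex.lt_iff.2 (Or.inl h)
    · filter_upwards [Ioi_mem_nhds h'] with _ hb using Prod.Lex.lt_iff.2 (Or.inr ⟨h, hb⟩)
  · rcases Prod.Lex.lt_iff.1 hz with h | ⟨h, h'⟩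
    · exact Eventually.of_forall fun _ => Prod.Lex.lt_iff.2 (Or.inl h)
    · filter_upwards [Iio_mem_nhds h'] with _ hb using Prod.Lex.lt_iff.2 (Or.inr ⟨h, hb⟩)

theorem countable_Ioo_ofLex_fst [Nontrivial β] [DenselyOrdered β] {X : Type*}
    [TopologicalSpace X] [PreconnectedSpace X] [SeparableSpace X]
    {f : X → Lex (α × β)} (hf : Continuous f) (x y : X) :
    (Ioo (ofLex (f x)).1 (ofLex (f y)).1).Countable := by
  obtain ⟨b₀, b₁, hb⟩ := exists_pair_lt β
  obtain ⟨c, hb₀c, hcb₁⟩ := exists_between hb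
  -- The open sets `f ⁻¹' ({a} ×ₗ (b₀, b₁))` are pairwise disjoint, and nonempty since the
  -- order-connected range of `f` contains `(a, c)` for every `a` strictly between the ends.
  refine PairwiseDisjoint.countable_of_isOpen
    (s := fun a => f ⁻¹' Ioo (toLex (a, b₀)) (toLex (a, b₁))) ?_
    (fun a _ => isOpen_Ioo.preimage hf) fun a ha => ?_
  · intro a _ a' _ hne
    refine disjoint_left.2 fun t ht ht' => hne ?_
    exact (Prod.Lex.ofLex_fst_eq_of_mem_Icc (Ioo_subset_Icc_self ht)).symm.trans
      (Prod.Lex.ofLex_fst_eq_of_mem_Icc (Ioo_subset_Icc_self ht'))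
  · have hmem : toLex (a, c) ∈ Icc (f x) (f y) :=
      ⟨Prod.Lex.lt_iff.2 (Or.inl ha.1) |>.le, Prod.Lex.lt_iff.2 (Or.inl ha.2) |>.le⟩
    obtain ⟨t, ht⟩ := (isPreconnected_range hf).ordConnected.out (mem_range_self x)
      (mem_range_self y) hmem
    refine ⟨t, ?_⟩
    simp only [mem_preimage, ht]
    exact ⟨Prod.Lex.toLex_lt_toLex.2 (Or.inr ⟨rfl, hb₀c⟩),
      Prod.Lex.toLex_lt_toLex.2 (Or.inr ⟨rfl, hcb₁⟩)⟩

variable [TopologicalSpace α] [OrderTopology α] [BoundedOrder β]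

theorem continuous_ofLex_fst : Continuous fun x : Lex (α × β) => (ofLex x).1 := by
  refine continuous_iff_continuousAt.2 fun x => tendsto_order.2 ⟨fun a ha => ?_, fun a ha => ?_⟩
  · filter_upwards [Ioi_mem_nhds (Prod.Lex.toLex_top_lt_iff.2 ha)] with _ hy
      using Prod.Lex.toLex_top_lt_iff.1 hy
  · filter_upwards [Iio_mem_nhds (Prod.Lex.lt_toLex_bot_iff.2 ha)] with _ hy
      using Prod.Lex.lt_toLex_bot_iff.1 hy

theorem continuousWithinAt_toLex_mk_top (a : α) :
    ContinuousWithinAt (fun a' : α => toLex (a', (⊤ : β))) (Ici a) a := by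
  refine tendsto_order.2 ⟨fun z hz => ?_, fun z hz => ?_⟩
  · filter_upwards [self_mem_nhdsWithin] with a' ha'
    exact hz.trans_le (Prod.Lex.toLex_mono (show (a, (⊤ : β)) ≤ (a', ⊤) from ⟨ha', le_rfl⟩))
  · filter_upwards [mem_nhdsWithin_of_mem_nhds (Iio_mem_nhds (Prod.Lex.toLex_top_lt_iff.1 hz))]
      with a' ha'
    exact Prod.Lex.toLex_top_lt_iff.2 ha'

theorem continuousWithinAt_toLex_mk_bot (a : α) :
    ContinuousWithinAt (fun a' : α => toLex (a', (⊥ : β))) (Iic a) a := by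
  refine tendsto_order.2 ⟨fun z hz => ?_, fun z hz => ?_⟩
  · filter_upwards [mem_nhdsWithin_of_mem_nhds (Ioi_mem_nhds (Prod.Lex.lt_toLex_bot_iff.1 hz))]
      with a' ha'
    exact Prod.Lex.lt_toLex_bot_iff.2 ha'
  · filter_upwards [self_mem_nhdsWithin] with a' ha'
    exact (Prod.Lex.toLex_mono (show (a', (⊥ : β)) ≤ (a, ⊥) from ⟨ha', le_rfl⟩)).trans_lt hz

theorem isQuotientMap_ofLex_fst : IsQuotientMap fun x : Lex (α × β) => (ofLex x).1 := by
  refine (isQuotientMap_iff _).2 ⟨isCoinducing_iff.2 fun U => ⟨fun hU => ?_,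
    fun hU => hU.preimage continuous_ofLex_fst⟩, fun a => ⟨toLex (a, ⊥), rfl⟩⟩
  -- Near `a`, `U` is reached from the left along `(·, ⊥)` and from the right along `(·, ⊤)`.
  refine isOpen_iff_mem_nhds.2 fun a ha => ?_
  rw [← nhdsLE_sup_nhdsGE, mem_sup]
  exact ⟨continuousWithinAt_toLex_mk_bot a (hU.mem_nhds ha),
    continuousWithinAt_toLex_mk_top a (hU.mem_nhds ha)⟩

theorem ofLex_fst_eq_of_continuous [Nontrivial β] [DenselyOrdered β] {X : Type*}
    [TopologicalSpace X] [CompactSpace X] [PreconnectedSpace X] [SeparableSpace X]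
    {f : X → Lex (α × β)} (hf : Continuous f) (x y : X) : (ofLex (f x)).1 = (ofLex (f y)).1 := by
  set g : X → α := fun t => (ofLex (f t)).1
  have hg : Continuous g := continuous_ofLex_fst.comp hf
  -- `range g` lies between its extreme values, hence is countable: Baire makes it a point.
  obtain ⟨_, ⟨t₀, rfl⟩, hmin⟩ := (isCompact_range hg).exists_isLeast ⟨g x, mem_range_self x⟩
  obtain ⟨_, ⟨t₁, rfl⟩, hmax⟩ := (isCompact_range hg).exists_isGreatest ⟨g x, mem_range_self x⟩
  have hcount : (range g).Countable := by
    refine ((countable_Ioo_ofLex_fst hf t₀ t₁).union (toFinite {g t₀, g t₁}).countable).mono ?_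
    rintro _ ⟨t, rfl⟩
    exact sdiff_subset_iff.1 (Icc_sdiff_Ioo_same (hmin (mem_range_self t₁))).le
      ⟨hmin (mem_range_self t), hmax (mem_range_self t)⟩
  have : CompactSpace (range g) := isCompact_iff_compactSpace.1 (isCompact_range hg)
  have : PreconnectedSpace (range g) := Subtype.preconnectedSpace (isPreconnected_range hg)
  have : Countable (range g) := hcount.to_subtype
  have := PreconnectedSpace.subsingleton_of_countable (X := range g)
  exact congrArg Subtype.val (Subsingleton.elim (⟨g x, mem_range_self x⟩ : range g)
    ⟨g y, mem_range_self y⟩)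

theorem joined_iff_ofLex_fst_eq [Nontrivial β] [DenselyOrdered β] [TopologicalSpace β]
    [OrderTopology β] [PathConnectedSpace β] {x y : Lex (α × β)} :
    Joined x y ↔ (ofLex x).1 = (ofLex y).1 := by
  refine ⟨fun ⟨γ⟩ => by simpa using ofLex_fst_eq_of_continuous γ.continuous 0 1, fun h => ?_⟩
  obtain ⟨a, b⟩ := x
  obtain ⟨a', b'⟩ := y
  obtain rfl : a = a' := h
  exact (PathConnectedSpace.joined b b').map (continuous_toLex_mk a)

end LexTopology

/-- For a linear order `L`, the lexicographically ordered space `X = L ×ₗ [0,1]` with the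
order topology has path components exactly the vertical segments `{ℓ} × [0,1]`, and
`π₀(X)` is homeomorphic to `L` (with its order topology) via first-coordinate projection. -/
theorem pi0_lex_prod_interval {L : Type*} [LinearOrder L] [TopologicalSpace L]
    [OrderTopology L] [TopologicalSpace (Lex (L × unitInterval))]
    [OrderTopology (Lex (L × unitInterval))] :
    (∀ a b : Lex (L × unitInterval),
        Joined a b ↔ (ofLex a).1 = (ofLex b).1) ∧
    ∃ h : ZerothHomotopy (Lex (L × unitInterval)) ≃ₜ L,
      ∀ x : Lex (L × unitInterval), h (pi0Mk x) = (ofLex x).1 := by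
  have hjoined (a b : Lex (L × unitInterval)) : Joined a b ↔ (ofLex a).1 = (ofLex b).1 :=
    joined_iff_ofLex_fst_eq
  have hquot : IsQuotientMap (⟨_, continuous_ofLex_fst⟩ : C(Lex (L × unitInterval), L)) :=
    isQuotientMap_ofLex_fst
  exact ⟨hjoined, (Homeomorph.Quotient.congrRight hjoined).trans hquot.homeomorph, fun _ => rfl⟩
end
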